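/- arXiv:2307.03318 — 3 statements merged into one kernel-verified Lean document; each statement's English description precedes it below -/
import Mathlib

section
/- If Φ = (φ_n)_{n∈ℕ} is a depth-bounded fuzzy simulation between fuzzy automata A and A', and Ψ = (ψ_n)_{n∈ℕ} is a depth-bounded fuzzy simulation between A' and A'', then the componentwise composition Φ ∘ Ψ = (φ_n ∘ ψ_n)_{n∈ℕ} is a depth-bounded fuzzy simulation between A and A''. -/
/-- A complete residuated lattice: a complete lattice where `⟨L, *, 1⟩` is a
commutative monoid with unit `1 = ⊤`, and the adjunction property holds. -/
class CompleteResiduatedLattice (L : Type*) extends CompleteLattice L, CommMonoid L where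
  rimp : L → L → L
  adjunction : ∀ x y z : L, x * y ≤ z ↔ x ≤ rimp y z
  one_eq_top : (1 : L) = ⊤

open CompleteResiduatedLattice

/-- A fuzzy automaton over alphabet `S` with state set `A`:
fuzzy transition function `δ`, fuzzy set of initial states `σ`,
fuzzy set of terminal states `τ`. -/
structure FuzzyAutomaton (L : Type*) [CompleteResiduatedLattice L] (S A : Type*) where
  δ : S → A → A → L
  σ : A → L
  τ : A → L

variable {L : Type*} [CompleteResiduatedLattice L]

lemma crl_mul_le_mul_left {a b : L} (c : L) (h : a ≤ b) : a * c ≤ b * c :=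
  (adjunction a c (b * c)).2 (le_trans h ((adjunction b c (b * c)).1 le_rfl))

lemma crl_mul_le_mul_right {a b : L} (c : L) (h : a ≤ b) : c * a ≤ c * b := by
  rw [mul_comm c a, mul_comm c b]; exact crl_mul_le_mul_left c h

lemma crl_mul_le_mul {a b c d : L} (h₁ : a ≤ b) (h₂ : c ≤ d) : a * c ≤ b * d :=
  le_trans (crl_mul_le_mul_left c h₁) (crl_mul_le_mul_right b h₂)

lemma crl_iSup_mul {ι : Sort*} (f : ι → L) (c : L) :
    (⨆ i, f i) * c = ⨆ i, f i * c := by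
  apply le_antisymm
  · exact (adjunction _ c _).2 (iSup_le fun i => (adjunction _ c _).1 (le_iSup (fun i => f i * c) i))
  · exact iSup_le fun i => crl_mul_le_mul_left c (le_iSup f i)

lemma crl_mul_iSup {ι : Sort*} (f : ι → L) (c : L) :
    c * (⨆ i, f i) = ⨆ i, c * f i := by
  rw [mul_comm, crl_iSup_mul]
  simp [mul_comm]

/-- `(φ_n)_{n∈ℕ}` is a depth-bounded fuzzy simulation between `M` and `M'`:
(1) the sequence is decreasing; (2) `φ₀⁻¹ ∘ τ ≤ τ'`;
(3) `φ_n⁻¹ ∘ δ_s ≤ δ'_s ∘ φ_{n-1}⁻¹` for `n ≥ 1`. -/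
def IsDBFS {S A A' : Type*} (M : FuzzyAutomaton L S A) (M' : FuzzyAutomaton L S A')
    (φ : ℕ → A → A' → L) : Prop :=
  (∀ n x x', φ (n + 1) x x' ≤ φ n x x') ∧
  (∀ x', (⨆ x, φ 0 x x' * M.τ x) ≤ M'.τ x') ∧
  (∀ s n x' y, (⨆ x, φ (n + 1) x x' * M.δ s x y) ≤ ⨆ y', M'.δ s x' y' * φ n y y')

theorem stmt8 {S A A' A'' : Type*} [Nonempty A] [Nonempty A'] [Nonempty A'']
    (M : FuzzyAutomaton L S A) (M' : FuzzyAutomaton L S A') (M'' : FuzzyAutomaton L S A'')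
    (φ : ℕ → A → A' → L) (ψ : ℕ → A' → A'' → L)
    (hφ : IsDBFS M M' φ) (hψ : IsDBFS M' M'' ψ) :
    IsDBFS M M'' (fun n x x'' => ⨆ x', φ n x x' * ψ n x' x'') := by
  obtain ⟨hφ1, hφ2, hφ3⟩ := hφ
  obtain ⟨hψ1, hψ2, hψ3⟩ := hψ
  refine ⟨?_, ?_, ?_⟩
  · intro n x x''
    exact iSup_le fun x' =>
      le_trans (crl_mul_le_mul (hφ1 n x x') (hψ1 n x' x''))
        (le_iSup (fun x' => φ n x x' * ψ n x' x'') x')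
  · intro x''
    apply iSup_le; intro x
    rw [crl_iSup_mul]
    apply iSup_le; intro x'
    calc φ 0 x x' * ψ 0 x' x'' * M.τ x
        = ψ 0 x' x'' * (φ 0 x x' * M.τ x) := by simp [mul_comm, mul_assoc, mul_left_comm]
      _ ≤ ψ 0 x' x'' * M'.τ x' := crl_mul_le_mul_right _
            (le_trans (le_iSup (fun x => φ 0 x x' * M.τ x) x) (hφ2 x'))
      _ ≤ M''.τ x'' := le_trans (le_iSup (fun x' => ψ 0 x' x'' * M'.τ x') x') (hψ2 x'')
  · intro s n x'' y
    apply iSup_le; intro x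
    rw [crl_iSup_mul]
    apply iSup_le; intro x'
    calc φ (n+1) x x' * ψ (n+1) x' x'' * M.δ s x y
        = ψ (n+1) x' x'' * (φ (n+1) x x' * M.δ s x y) := by simp [mul_comm, mul_assoc, mul_left_comm]
      _ ≤ ψ (n+1) x' x'' * (⨆ y', M'.δ s x' y' * φ n y y') := crl_mul_le_mul_right _
            (le_trans (le_iSup (fun x => φ (n+1) x x' * M.δ s x y) x) (hφ3 s n x' y))
      _ = ⨆ y', φ n y y' * (ψ (n+1) x' x'' * M'.δ s x' y') := by
            rw [crl_mul_iSup]; exact iSup_congr fun y' => by simp [mul_comm, mul_assoc, mul_left_comm]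
      _ ≤ ⨆ y', φ n y y' * (⨆ y'', M''.δ s x'' y'' * ψ n y' y'') := by
            apply iSup_mono; intro y'
            exact crl_mul_le_mul_right _
              (le_trans (le_iSup (fun x' => ψ (n+1) x' x'' * M'.δ s x' y') x') (hψ3 s n x'' y'))
      _ ≤ ⨆ y'', M''.δ s x'' y'' * ⨆ y', φ n y y' * ψ n y' y'' := by
            apply iSup_le; intro y'
            rw [crl_mul_iSup]
            apply iSup_le; intro y''
            calc φ n y y' * (M''.δ s x'' y'' * ψ n y' y'')
                = M''.δ s x'' y'' * (φ n y y' * ψ n y' y'') := by simp [mul_comm, mul_assoc, mul_left_comm]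
              _ ≤ M''.δ s x'' y'' * ⨆ y', φ n y y' * ψ n y' y'' :=
                  crl_mul_le_mul_right _ (le_iSup (fun y' => φ n y y' * ψ n y' y'') y')
              _ ≤ _ := le_iSup (fun y'' => M''.δ s x'' y'' * ⨆ y', φ n y y' * ψ n y' y'') y''
end

section
/- Let 𝚽 be a family of depth-bounded fuzzy simulations between fuzzy automata A and A'. Then the pointwise supremum ⋁𝚽, defined by (⋁𝚽)(n) = ⋁{Φ(n) : Φ ∈ 𝚽}, is also a depth-bounded fuzzy simulation between A and A'. Consequently, there always exists a greatest depth-bounded fuzzy simulation between A and A'. -/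
open CompleteResiduatedLattice

variable {L : Type*} [CompleteResiduatedLattice L]

lemma mul_le_mul_right'' {a b c : L} (h : a ≤ b) : a * c ≤ b * c := by
  rw [adjunction]
  exact h.trans ((adjunction b c (b * c)).mp le_rfl)

lemma sup_isDBFS {S A A' : Type*} (M : FuzzyAutomaton L S A) (M' : FuzzyAutomaton L S A')
    (F : Set (ℕ → A → A' → L)) (hF : ∀ Φ ∈ F, IsDBFS M M' Φ) :
    IsDBFS M M' (fun n x x' => ⨆ Φ ∈ F, Φ n x x') := by
  refine ⟨fun n x x' => ?_, fun x' => ?_, fun s n x' y => ?_⟩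
  · exact iSup₂_le fun Φ hΦ => le_iSup₂_of_le Φ hΦ ((hF Φ hΦ).1 n x x')
  · refine iSup_le fun x => ?_
    rw [adjunction]
    refine iSup₂_le fun Φ hΦ => ?_
    rw [← adjunction]
    exact le_trans (le_iSup (fun x => Φ 0 x x' * M.τ x) x) ((hF Φ hΦ).2.1 x')
  · refine iSup_le fun x => ?_
    rw [adjunction]
    refine iSup₂_le fun Φ hΦ => ?_
    rw [← adjunction]
    refine le_trans (le_iSup (fun x => Φ (n+1) x x' * M.δ s x y) x) ?_
    refine le_trans ((hF Φ hΦ).2.2 s n x' y) (iSup_mono fun y' => ?_)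
    rw [mul_comm, mul_comm (M'.δ s x' y')]
    exact mul_le_mul_right'' (le_iSup₂_of_le Φ hΦ le_rfl)

theorem stmt10 {S A A' : Type*} [Nonempty A] [Nonempty A']
    (M : FuzzyAutomaton L S A) (M' : FuzzyAutomaton L S A')
    (F : Set (ℕ → A → A' → L)) (hF : ∀ Φ ∈ F, IsDBFS M M' Φ) :
    IsDBFS M M' (fun n x x' => ⨆ Φ ∈ F, Φ n x x') ∧
    ∃ G : ℕ → A → A' → L, IsDBFS M M' G ∧
      ∀ Φ : ℕ → A → A' → L, IsDBFS M M' Φ → ∀ n x x', Φ n x x' ≤ G n x x' := by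
  refine ⟨sup_isDBFS M M' F hF, fun n x x' => ⨆ Φ ∈ {Ψ | IsDBFS M M' Ψ}, Φ n x x',
    sup_isDBFS M M' _ (fun Φ hΦ => hΦ), fun Φ hΦ n x x' => le_iSup₂_of_le Φ hΦ le_rfl⟩
end

section
/- Let (φ_n)_{n∈ℕ} be a depth-bounded fuzzy simulation between fuzzy automata A and A'. Then for every n ∈ ℕ: the norm ‖φ_n‖ = ⋀_{x∈A} (σ^A(x) ⇒ (σ^{A'} ∘ φ_n⁻¹)(x)) satisfies ‖φ_n‖ ≤ ⋀_{u ∈ Σ*, |u| ≤ n} (L(A)(u) ⇒ L(A')(u)), where L(A)(s_1…s_k) = σ^A ∘ δ^A_{s_1} ∘ … ∘ δ^A_{s_k} ∘ τ^A. -/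
open CompleteResiduatedLattice

variable {L : Type*} [CompleteResiduatedLattice L]

/-- The degree `(δ_{s₁} ∘ … ∘ δ_{s_k} ∘ τ)(x)` in which the automaton `M`
started at state `x` accepts the word `s₁…s_k`. -/
def accept {S A : Type*} (M : FuzzyAutomaton L S A) : List S → A → L
  | [], x => M.τ x
  | s :: w, x => ⨆ y, M.δ s x y * accept M w y

/-- The fuzzy language recognized by `M`: `L(M)(u) = ⋁_x σ(x) ⊗ accept M u x`. -/
def lang {S A : Type*} (M : FuzzyAutomaton L S A) (u : List S) : L :=
  ⨆ x, M.σ x * accept M u x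

theorem stmt13 {S A A' : Type*} [Nonempty A] [Nonempty A']
    (M : FuzzyAutomaton L S A) (M' : FuzzyAutomaton L S A')
    (φ : ℕ → A → A' → L) (hφ : IsDBFS M M' φ) (n : ℕ) :
    (⨅ x, rimp (M.σ x) (⨆ x', M'.σ x' * φ n x x')) ≤
      ⨅ (u : List S) (_ : u.length ≤ n), rimp (lang M u) (lang M' u) := by
  have adj : ∀ x y z : L, x * y ≤ z ↔ x ≤ rimp y z := adjunction
  have mul_mono : ∀ a b c : L, a ≤ b → c * a ≤ c * b := by
    intro a b c h
    rw [mul_comm, adj]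
    exact h.trans ((adj b c (c * b)).mp (mul_comm b c ▸ le_rfl))
  have phi_mono : ∀ m k, m ≤ k → ∀ x x', φ k x x' ≤ φ m x x' := by
    intro m k h x x'
    exact antitone_nat_of_succ_le (f := fun n => φ n x x') (fun i => hφ.1 i x x') h
  -- key lemma
  have key : ∀ (u : List S) (k : ℕ), u.length ≤ k → ∀ (x : A) (x' : A'),
      φ k x x' * accept M u x ≤ accept M' u x' := by
    intro u
    induction u with
    | nil =>
      intro k _ x x'
      calc φ k x x' * accept M [] x ≤ φ 0 x x' * M.τ x := by
            rw [mul_comm, mul_comm (φ 0 x x')]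
            exact mul_mono _ _ _ (phi_mono 0 k (Nat.zero_le k) x x')
        _ ≤ ⨆ y, φ 0 y x' * M.τ y := le_iSup (fun y => φ 0 y x' * M.τ y) x
        _ ≤ M'.τ x' := hφ.2.1 x'
    | cons s w ih =>
      intro k hk x x'
      obtain ⟨m, rfl⟩ : ∃ m, k = m + 1 := by
        cases k with
        | zero => simp at hk
        | succ m => exact ⟨m, rfl⟩
      have hw : w.length ≤ m := Nat.le_of_succ_le_succ hk
      show φ (m + 1) x x' * (⨆ y, M.δ s x y * accept M w y) ≤ accept M' (s :: w) x'
      rw [mul_comm, adj]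
      refine iSup_le fun y => ?_
      rw [← adj, mul_comm]
      calc φ (m + 1) x x' * (M.δ s x y * accept M w y)
          = (φ (m + 1) x x' * M.δ s x y) * accept M w y := by rw [mul_assoc]
        _ ≤ (⨆ z, φ (m + 1) z x' * M.δ s z y) * accept M w y := by
            rw [mul_comm, mul_comm _ (accept M w y)]
            exact mul_mono _ _ _ (le_iSup (fun z => φ (m + 1) z x' * M.δ s z y) x)
        _ ≤ (⨆ y', M'.δ s x' y' * φ m y y') * accept M w y := by
            rw [mul_comm, mul_comm _ (accept M w y)]
            exact mul_mono _ _ _ (hφ.2.2 s m x' y)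
        _ ≤ accept M' (s :: w) x' := by
            rw [adj]
            refine iSup_le fun y' => ?_
            rw [← adj, mul_assoc]
            calc M'.δ s x' y' * (φ m y y' * accept M w y)
                ≤ M'.δ s x' y' * accept M' w y' :=
                  mul_mono _ _ _ (ih m hw y y')
              _ ≤ ⨆ z, M'.δ s x' z * accept M' w z :=
                  le_iSup (fun z => M'.δ s x' z * accept M' w z) y'
  refine le_iInf fun u => le_iInf fun hu => ?_
  rw [← adj]
  show _ * lang M u ≤ lang M' u
  rw [mul_comm, adj]
  refine iSup_le fun x => ?_
  rw [← adj, mul_comm]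
  calc (⨅ z, rimp (M.σ z) (⨆ x', M'.σ x' * φ n z x')) * (M.σ x * accept M u x)
      = ((⨅ z, rimp (M.σ z) (⨆ x', M'.σ x' * φ n z x')) * M.σ x) * accept M u x := by
        rw [mul_assoc]
    _ ≤ (⨆ x', M'.σ x' * φ n x x') * accept M u x := by
        rw [mul_comm, mul_comm _ (accept M u x)]
        refine mul_mono _ _ _ ?_
        exact (adj _ _ _).mpr (iInf_le _ x)
    _ ≤ lang M' u := by
        rw [adj]
        refine iSup_le fun x' => ?_
        rw [← adj, mul_assoc]
        calc M'.σ x' * (φ n x x' * accept M u x)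
            ≤ M'.σ x' * accept M' u x' := mul_mono _ _ _ (key u n hu x x')
          _ ≤ lang M' u := le_iSup (fun z => M'.σ z * accept M' u z) x'
end
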